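/- Let λ ∈ (0,1) and t > 0 with λ^t ≥ 1/2, and set p = log(4 λ^t (1−λ)^t). Then there exists a (t,p)-conformal Borel probability measure m on (0,1] satisfying m(W_k) = [ (k−1) + λ^{−t}(1 − k/2) ]·(1/2)^k for every k ≥ 1. -/

import Mathlib

open MeasureTheory Set Filter Topology

/-- The Markov partition interval `W n = (lam^n, lam^(n-1)]` for `n ≥ 1`. -/
noncomputable def Wint (lam : ℝ) (n : ℕ) : Set ℝ := Set.Ioc (lam ^ n) (lam ^ (n - 1))

/-- The map `F_lam : (0,1] → (0,1]`, extended by the identity outside `(0,1]`.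
On `W n` it is `x ↦ (x - lam^n)/(lam(1-lam))` for `n ≥ 2` and
`x ↦ (x - lam)/(1-lam)` on `W 1`; for `x ∈ (0,1]` the branch index is
the least `n` with `lam^n < x`. -/
noncomputable def Flam (lam : ℝ) (x : ℝ) : ℝ :=
  if 0 < x ∧ x ≤ 1 then
    if sInf {n : ℕ | lam ^ n < x} = 1 then (x - lam) / (1 - lam)
    else (x - lam ^ sInf {n : ℕ | lam ^ n < x}) / (lam * (1 - lam))
  else x

/-- The slope of `F_lam` on the branch `W n`. -/
noncomputable def slopeW (lam : ℝ) (n : ℕ) : ℝ :=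
  if n = 1 then 1 / (1 - lam) else 1 / (lam * (1 - lam))

/-- A Borel measure `m` on `(0,1]` is `(t,p)`-conformal for `F_lam` if for every
branch `W n` and every Borel `A ⊆ W n` one has `m(F_lam(A)) = e^p * s_n^t * m(A)`. -/
def IsConformal (lam t p : ℝ) (m : Measure ℝ) : Prop :=
  ∀ n : ℕ, 1 ≤ n → ∀ A : Set ℝ, MeasurableSet A → A ⊆ Wint lam n →
    m (Flam lam '' A) = ENNReal.ofReal (Real.exp p * slopeW lam n ^ t) * m A

/-- A set is wandering for `F_lam` if its preimages under all iterates are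
pairwise disjoint. -/
def IsWanderingSet (lam : ℝ) (A : Set ℝ) : Prop :=
  Pairwise fun i j : ℕ => Disjoint ((Flam lam)^[i] ⁻¹' A) ((Flam lam)^[j] ⁻¹' A)

/-!
Write `a = lam ^ (-t) ∈ (0, 2]`. Then `e^p s_n^t = 1 / r_n` with `r_1 = a / 4` and `r_n = 1 / 4`
for `n ≥ 2`, so conformality says `m A = r_n m (F A)` for `A ⊆ W n`, and the distribution
function `H x = m (0, x]` must satisfy `H x = T_n + r_n H (F x)` on `W n`, where
`T_n = H (lam ^ n) = (n + 1 - a n / 2) 2^(-n)` is forced by `H 1 = 1` and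
`T_(n+1) = T_(n+2) + T_n / 4`. As `r_n ≤ 1/2`, unrolling this equation along the orbit of `x`
gives a bounded solution. It is monotone and right-continuous: the failure of either at `x` is at
most half the failure at `F x` (via the branch containing `x`), and right-continuity at `0`
comes from `T_n → 0`. Its Stieltjes measure is then a probability measure, and on each branch it
transforms under the affine inverse branch by the factor `1 / r_n`, which is conformality.
-/

section TwistedSum

variable {α : Type*} {f : α → α} {w c : α → ℝ}

noncomputable def twistedSum (f : α → α) (w c : α → ℝ) (x : α) : ℝ :=
  ∑' k, (∏ i ∈ Finset.range k, w (f^[i] x)) * c (f^[k] x)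

variable (hw0 : ∀ x, 0 ≤ w x) (hw : ∀ x, w x ≤ 1 / 2) (hc0 : ∀ x, 0 ≤ c x)
  (hc1 : ∀ x, c x ≤ 1)
include hw0 hw hc0 hc1

lemma twistedSum_term_mem_Icc (x : α) (k : ℕ) :
    (∏ i ∈ Finset.range k, w (f^[i] x)) * c (f^[k] x) ∈ Icc 0 ((1 / 2) ^ k) := by
  have hprod : 0 ≤ ∏ i ∈ Finset.range k, w (f^[i] x) := Finset.prod_nonneg fun i _ ↦ hw0 _
  refine ⟨mul_nonneg hprod (hc0 _), ?_⟩
  calc (∏ i ∈ Finset.range k, w (f^[i] x)) * c (f^[k] x)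
      ≤ (∏ _i ∈ Finset.range k, (1 / 2 : ℝ)) * 1 :=
        mul_le_mul (Finset.prod_le_prod (fun i _ ↦ hw0 _) fun i _ ↦ hw _) (hc1 _) (hc0 _)
          (by positivity)
    _ = (1 / 2) ^ k := by simp

lemma summable_twistedSum_term (x : α) :
    Summable fun k ↦ (∏ i ∈ Finset.range k, w (f^[i] x)) * c (f^[k] x) :=
  summable_geometric_two.of_nonneg_of_le
    (fun k ↦ (twistedSum_term_mem_Icc hw0 hw hc0 hc1 x k).1)
    (fun k ↦ (twistedSum_term_mem_Icc hw0 hw hc0 hc1 x k).2)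

lemma twistedSum_mem_Icc (x : α) : twistedSum f w c x ∈ Icc 0 2 := by
  refine ⟨tsum_nonneg fun k ↦ (twistedSum_term_mem_Icc hw0 hw hc0 hc1 x k).1, ?_⟩
  rw [← tsum_geometric_two]
  exact (summable_twistedSum_term hw0 hw hc0 hc1 x).tsum_le_tsum
    (fun k ↦ (twistedSum_term_mem_Icc hw0 hw hc0 hc1 x k).2) summable_geometric_two

lemma twistedSum_eq (x : α) : twistedSum f w c x = c x + w x * twistedSum f w c (f x) := by
  rw [twistedSum, (summable_twistedSum_term hw0 hw hc0 hc1 x).tsum_eq_zero_add, twistedSum,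
    ← tsum_mul_left]
  congr 1
  · simp
  · refine tsum_congr fun k ↦ ?_
    rw [Finset.prod_range_succ', Function.iterate_succ_apply]
    simp only [Function.iterate_succ_apply, Function.iterate_zero_apply]
    ring

end TwistedSum

/-- `branchWeight a n` and `tailMass a n` are the `r_n` and `T_n` of the proof sketch. -/
noncomputable def branchWeight (a : ℝ) (n : ℕ) : ℝ := if n = 1 then a / 4 else 1 / 4

noncomputable def tailMass (a : ℝ) (n : ℕ) : ℝ := ((n : ℝ) + 1 - a * n / 2) * (1 / 2) ^ n

section TailMass

variable {a : ℝ}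

lemma tailMass_zero : tailMass a 0 = 1 := by simp [tailMass]

lemma tailMass_succ_succ (n : ℕ) :
    tailMass a (n + 1) = tailMass a (n + 2) + tailMass a n / 4 := by
  simp only [tailMass, pow_succ]
  push_cast
  ring

lemma tailMass_pred_sub {k : ℕ} (hk : 1 ≤ k) :
    tailMass a (k - 1) - tailMass a k =
      ((k : ℝ) - 1 + a * (1 - (k : ℝ) / 2)) * (1 / 2) ^ k := by
  obtain ⟨n, rfl⟩ := Nat.exists_eq_add_of_le' hk
  simp only [tailMass, Nat.add_sub_cancel, pow_succ]
  push_cast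
  ring

lemma tendsto_tailMass : Tendsto (tailMass a) atTop (𝓝 0) := by
  have h := ((tendsto_self_mul_const_pow_of_lt_one (r := 1 / 2) (by norm_num)
    (by norm_num)).const_mul (1 - a / 2)).add
    (tendsto_pow_atTop_nhds_zero_of_lt_one (r := (1 / 2 : ℝ)) (by norm_num) (by norm_num))
  rw [mul_zero, zero_add] at h
  exact h.congr fun n ↦ by simp only [tailMass]; ring

lemma tailMass_nonneg (ha2 : a ≤ 2) (n : ℕ) : 0 ≤ tailMass a n := by
  have : (0 : ℝ) ≤ (2 - a) * n := mul_nonneg (by linarith) n.cast_nonneg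
  exact mul_nonneg (by linarith) (by positivity)

lemma tailMass_le_one (ha0 : 0 ≤ a) (n : ℕ) : tailMass a n ≤ 1 := by
  have hn : (n : ℝ) + 1 ≤ 2 ^ n := by exact_mod_cast Nat.lt_two_pow_self
  have : (0 : ℝ) ≤ a * n := mul_nonneg ha0 n.cast_nonneg
  calc tailMass a n ≤ 2 ^ n * (1 / 2) ^ n := by unfold tailMass; gcongr; linarith
    _ = 1 := by rw [← mul_pow]; norm_num

lemma tailMass_antitone (ha0 : 0 ≤ a) (ha2 : a ≤ 2) : Antitone (tailMass a) := by
  refine antitone_nat_of_succ_le fun n ↦ ?_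
  have : (0 : ℝ) ≤ (2 - a) * n := mul_nonneg (by linarith) n.cast_nonneg
  simp only [tailMass, pow_succ]
  push_cast
  nlinarith [pow_pos (by norm_num : (0 : ℝ) < 1 / 2) n]

lemma branchWeight_pos (ha0 : 0 < a) (n : ℕ) : 0 < branchWeight a n := by
  unfold branchWeight; split_ifs <;> linarith

lemma branchWeight_le_half (ha2 : a ≤ 2) (n : ℕ) : branchWeight a n ≤ 1 / 2 := by
  unfold branchWeight; split_ifs <;> linarith

end TailMass

noncomputable def branchScale (lam : ℝ) (n : ℕ) : ℝ :=
  if n = 1 then 1 - lam else lam * (1 - lam)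

noncomputable def branch (lam : ℝ) (n : ℕ) (x : ℝ) : ℝ := (x - lam ^ n) / branchScale lam n

noncomputable def branchInv (lam : ℝ) (n : ℕ) (z : ℝ) : ℝ := lam ^ n + branchScale lam n * z

noncomputable def branchIndex (lam x : ℝ) : ℕ := sInf {n : ℕ | lam ^ n < x}

/-- For `n = 1` the exponent `n - 2` truncates to `0`: the first branch maps onto `(0, 1]`. -/
lemma pow_pred_sub_pow {lam : ℝ} {n : ℕ} (hn : 1 ≤ n) :
    lam ^ (n - 1) - lam ^ n = branchScale lam n * lam ^ (n - 2) := by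
  obtain _ | _ | n := n
  · omega
  · simp [branchScale]
  · rw [show n + 1 + 1 - 1 = n + 1 by omega, show n + 1 + 1 - 2 = n by omega]
    simp only [branchScale, Nat.add_eq_right, Nat.add_eq_zero_iff, one_ne_zero, and_false,
      if_false]
    ring

lemma branch_pow {lam : ℝ} (n : ℕ) : branch lam n (lam ^ n) = 0 := by simp [branch]

section Branches

variable {lam : ℝ} (h1 : 0 < lam) (h2 : lam < 1)
include h1 h2

lemma branchScale_pos (n : ℕ) : 0 < branchScale lam n := by
  unfold branchScale; split_ifs <;> nlinarith

lemma branch_strictMono (n : ℕ) : StrictMono (branch lam n) := fun _ _ hxy ↦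
  div_lt_div_of_pos_right (by linarith) (branchScale_pos h1 h2 n)

lemma branch_branchInv (n : ℕ) (z : ℝ) : branch lam n (branchInv lam n z) = z := by
  have := (branchScale_pos h1 h2 n).ne'
  simp only [branch, branchInv]
  field_simp
  ring

lemma branchInv_branch (n : ℕ) (x : ℝ) : branchInv lam n (branch lam n x) = x := by
  have := (branchScale_pos h1 h2 n).ne'
  simp only [branch, branchInv]
  field_simp
  ring

lemma branch_pow_pred {n : ℕ} (hn : 1 ≤ n) : branch lam n (lam ^ (n - 1)) = lam ^ (n - 2) := by
  rw [branch, pow_pred_sub_pow hn, mul_div_cancel_left₀ _ (branchScale_pos h1 h2 n).ne']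

lemma branch_mem_Icc {n : ℕ} (hn : 1 ≤ n) {x : ℝ} (hx : x ∈ Icc (lam ^ n) (lam ^ (n - 1))) :
    branch lam n x ∈ Icc 0 1 := by
  have hmono := (branch_strictMono h1 h2 n).monotone
  refine ⟨branch_pow n ▸ hmono hx.1, ?_⟩
  calc branch lam n x ≤ lam ^ (n - 2) := branch_pow_pred h1 h2 hn ▸ hmono hx.2
    _ ≤ 1 := pow_le_one₀ h1.le h2.le

lemma Wint_subset_Ioc (n : ℕ) : Wint lam n ⊆ Ioc 0 1 := fun _ hx ↦
  ⟨(pow_pos h1 n).trans hx.1, hx.2.trans (pow_le_one₀ h1.le h2.le)⟩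

lemma branchIndex_eq {n : ℕ} (hn : 1 ≤ n) {x : ℝ} (hx : x ∈ Wint lam n) :
    branchIndex lam x = n := by
  refine le_antisymm (Nat.sInf_le hx.1) (le_csInf ⟨n, hx.1⟩ fun k hk ↦ ?_)
  have : lam ^ k < lam ^ (n - 1) := lt_of_lt_of_le hk hx.2
  have := (pow_lt_pow_iff_right_of_lt_one₀ h1 h2).1 this
  omega

omit h1 in
lemma mem_Wint_branchIndex {x : ℝ} (hx : x ∈ Ioc 0 1) :
    1 ≤ branchIndex lam x ∧ x ∈ Wint lam (branchIndex lam x) := by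
  have hne : {n : ℕ | lam ^ n < x}.Nonempty := exists_pow_lt_of_lt_one hx.1 h2
  have hlt : lam ^ branchIndex lam x < x := Nat.sInf_mem hne
  have hpos : 1 ≤ branchIndex lam x := by
    by_contra! h
    rw [Nat.lt_one_iff.1 h, pow_zero] at hlt
    linarith [hx.2]
  refine ⟨hpos, hlt, not_lt.1 fun h ↦ ?_⟩
  have : branchIndex lam x ≤ branchIndex lam x - 1 := Nat.sInf_le h
  omega

omit h1 in
lemma exists_mem_Ico_pow {x : ℝ} (hx : x ∈ Ioo 0 1) :
    ∃ n, 1 ≤ n ∧ x ∈ Ico (lam ^ n) (lam ^ (n - 1)) := by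
  classical
  have hex : ∃ n, lam ^ n ≤ x := (exists_pow_lt_of_lt_one hx.1 h2).imp fun _ ↦ le_of_lt
  have hpos : 1 ≤ Nat.find hex := by
    by_contra! h
    have := Nat.find_spec hex
    rw [Nat.lt_one_iff.1 h, pow_zero] at this
    linarith [hx.2]
  exact ⟨Nat.find hex, hpos, Nat.find_spec hex, not_le.1 (Nat.find_min hex (by omega))⟩

lemma Flam_eq_branch {n : ℕ} (hn : 1 ≤ n) {x : ℝ} (hx : x ∈ Wint lam n) :
    Flam lam x = branch lam n x := by
  have hx01 := Wint_subset_Ioc h1 h2 n hx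
  have hidx : sInf {k : ℕ | lam ^ k < x} = n := branchIndex_eq h1 h2 hn hx
  rw [Flam, if_pos (show 0 < x ∧ x ≤ 1 from hx01), hidx, branch, branchScale]
  split_ifs with h
  · subst h; rw [pow_one]
  · rfl

lemma Flam_image_eq_preimage_branchInv {n : ℕ} (hn : 1 ≤ n) {A : Set ℝ}
    (hA : A ⊆ Wint lam n) :
    Flam lam '' A = branchInv lam n ⁻¹' A := by
  ext z
  constructor
  · rintro ⟨x, hx, rfl⟩
    rwa [mem_preimage, Flam_eq_branch h1 h2 hn (hA hx), branchInv_branch h1 h2]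
  · intro hz
    exact ⟨_, hz, by rw [Flam_eq_branch h1 h2 hn (hA hz), branch_branchInv h1 h2]⟩

end Branches

lemma Monotone.continuousWithinAt_Ici_of_forall_exists_lt {α β : Type*} [LinearOrder α]
    [TopologicalSpace α] [OrderTopology α] [Preorder β] [TopologicalSpace β] [OrderTopology β]
    {f : α → β} (hf : Monotone f) {x : α} (h : ∀ b > f x, ∃ y > x, f y < b) :
    ContinuousWithinAt f (Ici x) x := by
  refine tendsto_order.2 ⟨fun b hb ↦ ?_, fun b hb ↦ ?_⟩
  · filter_upwards [self_mem_nhdsWithin] with y hy using hb.trans_le (hf hy)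
  · obtain ⟨y₀, hxy₀, hy₀⟩ := h b hb
    filter_upwards [Ico_mem_nhdsGE hxy₀] with y hy using (hf hy.2.le).trans_lt hy₀

noncomputable def conformalCdf (lam a x : ℝ) : ℝ :=
  if x ≤ 0 then 0
  else if x ≤ 1 then
    twistedSum (Flam lam) (fun y ↦ branchWeight a (branchIndex lam y))
      (fun y ↦ tailMass a (branchIndex lam y)) x
  else 1

section ConformalCdf

variable {lam a : ℝ} (h1 : 0 < lam) (h2 : lam < 1) (ha0 : 0 < a) (ha2 : a ≤ 2)

lemma conformalCdf_of_nonpos {x : ℝ} (hx : x ≤ 0) : conformalCdf lam a x = 0 := if_pos hx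

include ha0 ha2 in
lemma conformalCdf_mem_Icc (x : ℝ) : conformalCdf lam a x ∈ Icc 0 2 := by
  unfold conformalCdf
  split_ifs
  · simp
  · exact twistedSum_mem_Icc (fun _ ↦ (branchWeight_pos ha0 _).le)
      (fun _ ↦ branchWeight_le_half ha2 _) (fun _ ↦ tailMass_nonneg ha2 _)
      (fun _ ↦ tailMass_le_one ha0.le _) x
  · norm_num

include h1 h2 ha0 ha2

lemma conformalCdf_eq_of_mem_Wint {n : ℕ} (hn : 1 ≤ n) {x : ℝ} (hx : x ∈ Wint lam n) :
    conformalCdf lam a x =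
      tailMass a n + branchWeight a n * conformalCdf lam a (branch lam n x) := by
  have hx01 := Wint_subset_Ioc h1 h2 n hx
  have hbx : branch lam n x ∈ Ioc 0 1 :=
    ⟨branch_pow (lam := lam) n ▸ branch_strictMono h1 h2 n hx.1,
      (branch_mem_Icc h1 h2 hn (Ioc_subset_Icc_self hx)).2⟩
  simp only [conformalCdf, if_neg hx01.1.not_ge, if_pos hx01.2, if_neg hbx.1.not_ge,
    if_pos hbx.2]
  rw [twistedSum_eq (fun _ ↦ (branchWeight_pos ha0 _).le) (fun _ ↦ branchWeight_le_half ha2 _)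
    (fun _ ↦ tailMass_nonneg ha2 _) (fun _ ↦ tailMass_le_one ha0.le _),
    branchIndex_eq h1 h2 hn hx, Flam_eq_branch h1 h2 hn hx]

lemma conformalCdf_one : conformalCdf lam a 1 = 1 := by
  have h := conformalCdf_eq_of_mem_Wint h1 h2 ha0 ha2 le_rfl (x := 1)
    ⟨by simpa using h2, by simp⟩
  have hb : branch lam 1 1 = 1 := by simpa using branch_pow_pred h1 h2 (le_refl 1)
  have hT : tailMass a 1 = 1 - a / 4 := by norm_num [tailMass]; ring
  rw [hb, hT, branchWeight, if_pos rfl] at h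
  have : (1 - a / 4) * (conformalCdf lam a 1 - 1) = 0 := by linarith
  exact sub_eq_zero.1 ((mul_eq_zero.1 this).resolve_left (by linarith))

lemma conformalCdf_of_one_le {x : ℝ} (hx : 1 ≤ x) : conformalCdf lam a x = 1 := by
  rcases hx.eq_or_lt with rfl | hx
  · exact conformalCdf_one h1 h2 ha0 ha2
  · simp [conformalCdf, (zero_lt_one.trans hx).not_ge, hx.not_ge]

lemma conformalCdf_pow (n : ℕ) : conformalCdf lam a (lam ^ n) = tailMass a n := by
  induction n with
  | zero => rw [pow_zero, conformalCdf_one h1 h2 ha0 ha2, tailMass_zero]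
  | succ n ih =>
    have hW : lam ^ (n + 1) ∈ Wint lam (n + 2) :=
      ⟨pow_lt_pow_right_of_lt_one₀ h1 h2 (by omega), le_rfl⟩
    have hb : branch lam (n + 2) (lam ^ (n + 1)) = lam ^ n := by
      simpa using branch_pow_pred h1 h2 (n := n + 2) (by omega)
    rw [conformalCdf_eq_of_mem_Wint h1 h2 ha0 ha2 (by omega) hW, hb, ih,
      tailMass_succ_succ n, branchWeight, if_neg (by omega)]
    ring

lemma conformalCdf_eq_of_mem_Icc {n : ℕ} (hn : 1 ≤ n) {x : ℝ}
    (hx : x ∈ Icc (lam ^ n) (lam ^ (n - 1))) :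
    conformalCdf lam a x =
      tailMass a n + branchWeight a n * conformalCdf lam a (branch lam n x) := by
  rcases hx.1.eq_or_lt with rfl | hlt
  · rw [branch_pow, conformalCdf_of_nonpos le_rfl, mul_zero, add_zero,
      conformalCdf_pow h1 h2 ha0 ha2]
  · exact conformalCdf_eq_of_mem_Wint h1 h2 ha0 ha2 hn ⟨hlt, hx.2⟩

lemma tailMass_le_conformalCdf {j : ℕ} {y : ℝ} (hy : y ∈ Ioc (lam ^ j) 1) :
    tailMass a j ≤ conformalCdf lam a y := by
  obtain ⟨hn, hW⟩ := mem_Wint_branchIndex h2 ⟨(pow_pos h1 j).trans hy.1, hy.2⟩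
  have hnj : branchIndex lam y ≤ j := by
    have := (pow_lt_pow_iff_right_of_lt_one₀ h1 h2).1 (hy.1.trans_le hW.2)
    omega
  rw [conformalCdf_eq_of_mem_Wint h1 h2 ha0 ha2 hn hW]
  have := mul_nonneg (branchWeight_pos ha0 (branchIndex lam y)).le
    (conformalCdf_mem_Icc ha0 ha2 (lam := lam) (branch lam (branchIndex lam y) y)).1
  linarith [tailMass_antitone ha0.le ha2 hnj]

lemma conformalCdf_le_add_half_pow (k : ℕ) :
    ∀ x ∈ Icc (0 : ℝ) 1, ∀ y ∈ Icc (0 : ℝ) 1, x ≤ y →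
    conformalCdf lam a x ≤ conformalCdf lam a y + 2 * (1 / 2) ^ k := by
  induction k with
  | zero =>
    intro x _ y _ _
    linarith [(conformalCdf_mem_Icc ha0 ha2 (lam := lam) x).2,
      (conformalCdf_mem_Icc ha0 ha2 (lam := lam) y).1]
  | succ k ih =>
    intro x hx y hy hxy
    have hHy := (conformalCdf_mem_Icc ha0 ha2 (lam := lam) y).1
    rcases hx.1.eq_or_lt with rfl | hx0
    · rw [conformalCdf_of_nonpos le_rfl]
      positivity
    obtain ⟨hn, hW⟩ := mem_Wint_branchIndex h2 ⟨hx0, hx.2⟩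
    set n := branchIndex lam x
    have hxI : x ∈ Icc (lam ^ n) (lam ^ (n - 1)) := Ioc_subset_Icc_self hW
    have hxy' : x ≤ min y (lam ^ (n - 1)) := le_min hxy hW.2
    have hy'I : min y (lam ^ (n - 1)) ∈ Icc (lam ^ n) (lam ^ (n - 1)) :=
      ⟨hxI.1.trans hxy', min_le_right _ _⟩
    have hstep : conformalCdf lam a x ≤
        conformalCdf lam a (min y (lam ^ (n - 1))) + 2 * (1 / 2) ^ (k + 1) := by
      have hb := ih _ (branch_mem_Icc h1 h2 hn hxI) _ (branch_mem_Icc h1 h2 hn hy'I)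
        ((branch_strictMono h1 h2 n).monotone hxy')
      rw [conformalCdf_eq_of_mem_Icc h1 h2 ha0 ha2 hn hxI,
        conformalCdf_eq_of_mem_Icc h1 h2 ha0 ha2 hn hy'I, pow_succ]
      nlinarith [branchWeight_pos ha0 n, branchWeight_le_half ha2 n,
        pow_pos (by norm_num : (0 : ℝ) < 1 / 2) k]
    have hy'y : conformalCdf lam a (min y (lam ^ (n - 1))) ≤ conformalCdf lam a y := by
      by_cases h : y ≤ lam ^ (n - 1)
      · rw [min_eq_left h]
      · rw [min_eq_right (not_le.1 h).le, conformalCdf_pow h1 h2 ha0 ha2]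
        exact tailMass_le_conformalCdf h1 h2 ha0 ha2 ⟨not_le.1 h, hy.2⟩
    linarith

lemma monotoneOn_conformalCdf : MonotoneOn (conformalCdf lam a) (Icc 0 1) := by
  intro x hx y hy hxy
  have hlim : Tendsto (fun k : ℕ ↦ conformalCdf lam a y + 2 * (1 / 2) ^ k) atTop
      (𝓝 (conformalCdf lam a y)) := by
    simpa using ((tendsto_pow_atTop_nhds_zero_of_lt_one (r := (1 / 2 : ℝ)) (by norm_num)
      (by norm_num)).const_mul 2).const_add (conformalCdf lam a y)
  exact ge_of_tendsto' hlim fun k ↦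
    conformalCdf_le_add_half_pow h1 h2 ha0 ha2 k x hx y hy hxy

lemma conformalCdf_projIcc (x : ℝ) :
    conformalCdf lam a (projIcc 0 1 zero_le_one x) = conformalCdf lam a x := by
  rcases le_total x 0 with hx | hx
  · rw [projIcc_of_le_left _ hx, conformalCdf_of_nonpos hx, conformalCdf_of_nonpos le_rfl]
  rcases le_total 1 x with hx1 | hx1
  · rw [projIcc_of_right_le _ hx1, conformalCdf_of_one_le h1 h2 ha0 ha2 hx1,
      conformalCdf_of_one_le h1 h2 ha0 ha2 le_rfl]
  · rw [projIcc_of_mem _ ⟨hx, hx1⟩]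

lemma monotone_conformalCdf : Monotone (conformalCdf lam a) := fun x y hxy ↦ by
  rw [← conformalCdf_projIcc h1 h2 ha0 ha2 x, ← conformalCdf_projIcc h1 h2 ha0 ha2 y]
  exact monotoneOn_conformalCdf h1 h2 ha0 ha2 (projIcc 0 1 _ x).2 (projIcc 0 1 _ y).2
    (monotone_projIcc _ hxy)

lemma exists_conformalCdf_le_add_half_pow (k : ℕ) : ∀ x ∈ Ico (0 : ℝ) 1,
    ∃ y ∈ Ioc x 1, conformalCdf lam a y ≤ conformalCdf lam a x + (1 / 2) ^ k := by
  induction k with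
  | zero =>
    intro x hx
    refine ⟨1, ⟨hx.2, le_rfl⟩, ?_⟩
    rw [conformalCdf_one h1 h2 ha0 ha2, pow_zero]
    linarith [(conformalCdf_mem_Icc ha0 ha2 (lam := lam) x).1]
  | succ k ih =>
    intro x hx
    rcases hx.1.eq_or_lt with rfl | hx0
    · obtain ⟨j, hj⟩ := (tendsto_tailMass.eventually
        (ge_mem_nhds (by positivity : (0 : ℝ) < (1 / 2) ^ (k + 1)))).exists
      refine ⟨lam ^ j, ⟨pow_pos h1 j, pow_le_one₀ h1.le h2.le⟩, ?_⟩
      rwa [conformalCdf_pow h1 h2 ha0 ha2, conformalCdf_of_nonpos le_rfl, zero_add]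
    obtain ⟨n, hn, hxI⟩ := exists_mem_Ico_pow h2 ⟨hx0, hx.2⟩
    have hbr := branch_strictMono h1 h2 n
    have hbx : branch lam n x ∈ Ico 0 (lam ^ (n - 2)) :=
      ⟨branch_pow (lam := lam) n ▸ hbr.monotone hxI.1,
        branch_pow_pred h1 h2 hn ▸ hbr hxI.2⟩
    obtain ⟨z, hz, hHz⟩ := ih _ ⟨hbx.1, hbx.2.trans_le (pow_le_one₀ h1.le h2.le)⟩
    set y := branchInv lam n (min z (lam ^ (n - 2)))
    have hby : branch lam n y = min z (lam ^ (n - 2)) := branch_branchInv h1 h2 n _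
    have hxy : x < y := hbr.lt_iff_lt.1 (hby ▸ lt_min hz.1 hbx.2)
    have hyle : y ≤ lam ^ (n - 1) :=
      hbr.le_iff_le.1 (by rw [hby, branch_pow_pred h1 h2 hn]; exact min_le_right _ _)
    refine ⟨y, ⟨hxy, hyle.trans (pow_le_one₀ h1.le h2.le)⟩, ?_⟩
    have hmin : conformalCdf lam a (min z (lam ^ (n - 2))) ≤ conformalCdf lam a z :=
      monotone_conformalCdf h1 h2 ha0 ha2 (min_le_left _ _)
    rw [conformalCdf_eq_of_mem_Icc h1 h2 ha0 ha2 hn ⟨hxI.1.trans hxy.le, hyle⟩,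
      conformalCdf_eq_of_mem_Icc h1 h2 ha0 ha2 hn (Ico_subset_Icc_self hxI), hby, pow_succ]
    nlinarith [branchWeight_pos ha0 n, branchWeight_le_half ha2 n,
      pow_pos (by norm_num : (0 : ℝ) < 1 / 2) k]

lemma continuousWithinAt_conformalCdf (x : ℝ) :
    ContinuousWithinAt (conformalCdf lam a) (Ici x) x := by
  refine (monotone_conformalCdf h1 h2 ha0 ha2).continuousWithinAt_Ici_of_forall_exists_lt
    fun b hb ↦ ?_
  rcases lt_or_ge x 0 with hx | hx
  · refine ⟨x / 2, by linarith, ?_⟩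
    rwa [conformalCdf_of_nonpos (by linarith), ← conformalCdf_of_nonpos (lam := lam) (a := a)
      hx.le]
  rcases lt_or_ge x 1 with hx1 | hx1
  · obtain ⟨k, hk⟩ := exists_pow_lt_of_lt_one (sub_pos.2 hb) (by norm_num : (1 / 2 : ℝ) < 1)
    obtain ⟨y, hy, hHy⟩ := exists_conformalCdf_le_add_half_pow h1 h2 ha0 ha2 k x ⟨hx, hx1⟩
    exact ⟨y, hy.1, by linarith⟩
  · refine ⟨x + 1, by linarith, ?_⟩
    rwa [conformalCdf_of_one_le h1 h2 ha0 ha2 (by linarith),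
      ← conformalCdf_of_one_le h1 h2 ha0 ha2 hx1]

end ConformalCdf

noncomputable def conformalStieltjes {lam a : ℝ} (h1 : 0 < lam) (h2 : lam < 1) (ha0 : 0 < a)
    (ha2 : a ≤ 2) : StieltjesFunction ℝ where
  toFun := conformalCdf lam a
  mono' := monotone_conformalCdf h1 h2 ha0 ha2
  right_continuous' := continuousWithinAt_conformalCdf h1 h2 ha0 ha2

lemma preimage_branchInv_Ioc {lam : ℝ} (h1 : 0 < lam) (h2 : lam < 1) (n : ℕ) (u v : ℝ) :
    branchInv lam n ⁻¹' Ioc u v = Ioc (branch lam n u) (branch lam n v) := by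
  ext z
  conv_rhs => rw [← branch_branchInv h1 h2 n z]
  simp only [mem_preimage, mem_Ioc, (branch_strictMono h1 h2 n).lt_iff_lt,
    (branch_strictMono h1 h2 n).le_iff_le]

section ConformalMeasure

variable {lam a : ℝ} (h1 : 0 < lam) (h2 : lam < 1) (ha0 : 0 < a) (ha2 : a ≤ 2)
include h1 h2 ha0 ha2

lemma conformalStieltjes_measure_Ioc (u v : ℝ) :
    (conformalStieltjes h1 h2 ha0 ha2).measure (Ioc u v) =
      ENNReal.ofReal (conformalCdf lam a v - conformalCdf lam a u) :=
  StieltjesFunction.measure_Ioc _ u v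

lemma isProbabilityMeasure_conformalStieltjes :
    IsProbabilityMeasure (conformalStieltjes h1 h2 ha0 ha2).measure := by
  refine StieltjesFunction.isProbabilityMeasure _ (tendsto_const_nhds.congr' ?_)
    (tendsto_const_nhds.congr' ?_)
  · filter_upwards [eventually_le_atBot 0] with x hx using (conformalCdf_of_nonpos hx).symm
  · filter_upwards [eventually_ge_atTop 1] with x hx
    exact (conformalCdf_of_one_le h1 h2 ha0 ha2 hx).symm

lemma conformalStieltjes_measure_Ioc_zero_one :
    (conformalStieltjes h1 h2 ha0 ha2).measure (Ioc 0 1) = 1 := by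
  rw [conformalStieltjes_measure_Ioc, conformalCdf_one h1 h2 ha0 ha2,
    conformalCdf_of_nonpos le_rfl, sub_zero, ENNReal.ofReal_one]

lemma conformalStieltjes_measure_Wint (k : ℕ) :
    (conformalStieltjes h1 h2 ha0 ha2).measure (Wint lam k) =
      ENNReal.ofReal (tailMass a (k - 1) - tailMass a k) := by
  rw [Wint, conformalStieltjes_measure_Ioc, conformalCdf_pow h1 h2 ha0 ha2,
    conformalCdf_pow h1 h2 ha0 ha2]

lemma conformalStieltjes_measure_preimage_branchInv_Ioc {n : ℕ} (hn : 1 ≤ n) {c : ℝ}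
    (hc : c ≤ lam ^ (n - 1)) :
    (conformalStieltjes h1 h2 ha0 ha2).measure (branchInv lam n ⁻¹' Ioc (lam ^ n) c) =
      ENNReal.ofReal (branchWeight a n)⁻¹ *
        (conformalStieltjes h1 h2 ha0 ha2).measure (Ioc (lam ^ n) c) := by
  rcases lt_or_ge c (lam ^ n) with hc' | hc'
  · simp [Ioc_eq_empty_of_le hc'.le]
  have hr := branchWeight_pos ha0 n
  rw [preimage_branchInv_Ioc h1 h2, conformalStieltjes_measure_Ioc,
    conformalStieltjes_measure_Ioc, branch_pow, conformalCdf_of_nonpos le_rfl,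
    conformalCdf_pow h1 h2 ha0 ha2, conformalCdf_eq_of_mem_Icc h1 h2 ha0 ha2 hn ⟨hc', hc⟩,
    ← ENNReal.ofReal_mul (inv_nonneg.2 hr.le)]
  congr 1
  field_simp
  ring

lemma conformalStieltjes_measure_image_Flam {n : ℕ} (hn : 1 ≤ n) {A : Set ℝ}
    (hA : MeasurableSet A) (hAW : A ⊆ Wint lam n) :
    (conformalStieltjes h1 h2 ha0 ha2).measure (Flam lam '' A) =
      ENNReal.ofReal (branchWeight a n)⁻¹ * (conformalStieltjes h1 h2 ha0 ha2).measure A := by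
  set μ := (conformalStieltjes h1 h2 ha0 ha2).measure
  have := isProbabilityMeasure_conformalStieltjes h1 h2 ha0 ha2
  have hmeas : Measurable (branchInv lam n) := by unfold branchInv; fun_prop
  have hrestrict : (μ.map (branchInv lam n)).restrict (Wint lam n) =
      ENNReal.ofReal (branchWeight a n)⁻¹ • μ.restrict (Wint lam n) := by
    refine Measure.ext_of_Iic _ _ fun u ↦ ?_
    have hI : Iic u ∩ Wint lam n = Ioc (lam ^ n) (lam ^ (n - 1) ⊓ u) := by
      rw [inter_comm, Wint, Ioc_inter_Iic]
    rw [Measure.restrict_apply measurableSet_Iic, Measure.smul_apply,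
      Measure.restrict_apply measurableSet_Iic, hI, Measure.map_apply hmeas measurableSet_Ioc,
      smul_eq_mul, conformalStieltjes_measure_preimage_branchInv_Ioc h1 h2 ha0 ha2 hn
        inf_le_left]
  calc μ (Flam lam '' A) = μ.map (branchInv lam n) A := by
        rw [Flam_image_eq_preimage_branchInv h1 h2 hn hAW, Measure.map_apply hmeas hA]
    _ = (μ.map (branchInv lam n)).restrict (Wint lam n) A := by
        rw [Measure.restrict_apply hA, inter_eq_self_of_subset_left hAW]
    _ = ENNReal.ofReal (branchWeight a n)⁻¹ * μ A := by
        rw [hrestrict, Measure.smul_apply, Measure.restrict_apply hA,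
          inter_eq_self_of_subset_left hAW, smul_eq_mul]

end ConformalMeasure

lemma exp_log_mul_slopeW_rpow {lam : ℝ} (h1 : 0 < lam) (h2 : lam < 1) (t : ℝ) (n : ℕ) :
    Real.exp (Real.log (4 * lam ^ t * (1 - lam) ^ t)) * slopeW lam n ^ t =
      (branchWeight (lam ^ (-t)) n)⁻¹ := by
  have hq : 0 < 1 - lam := by linarith
  have hlt := Real.rpow_pos_of_pos h1 t
  have hqt := Real.rpow_pos_of_pos hq t
  rw [Real.exp_log (by positivity), Real.rpow_neg h1.le, slopeW, branchWeight]
  split_ifs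
  · rw [one_div, Real.inv_rpow hq.le]
    field_simp
  · rw [one_div, Real.inv_rpow (by positivity), Real.mul_rpow h1.le hq.le]
    field_simp

theorem stmt5_general (lam t : ℝ) (h1 : 0 < lam) (h2 : lam < 1)
    (hlt : 1/2 ≤ lam ^ t) :
    ∃ m : Measure ℝ, IsProbabilityMeasure m ∧ m (Set.Ioc 0 1) = 1 ∧
      IsConformal lam t (Real.log (4 * lam^t * (1-lam)^t)) m ∧
      ∀ k : ℕ, 1 ≤ k → m (Wint lam k) =
        ENNReal.ofReal (((k:ℝ) - 1 + lam ^ (-t) * (1 - (k:ℝ)/2)) * (1/2)^k) := by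
  have ha0 : 0 < lam ^ (-t) := Real.rpow_pos_of_pos h1 _
  have ha2 : lam ^ (-t) ≤ 2 := by
    rw [Real.rpow_neg h1.le, inv_le_comm₀ (Real.rpow_pos_of_pos h1 t) two_pos]
    linarith
  refine ⟨(conformalStieltjes h1 h2 ha0 ha2).measure,
    isProbabilityMeasure_conformalStieltjes h1 h2 ha0 ha2,
    conformalStieltjes_measure_Ioc_zero_one h1 h2 ha0 ha2, fun n hn A hA hAW ↦ ?_,
    fun k hk ↦ ?_⟩
  · rw [conformalStieltjes_measure_image_Flam h1 h2 ha0 ha2 hn hA hAW,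
      exp_log_mul_slopeW_rpow h1 h2]
  · rw [conformalStieltjes_measure_Wint, tailMass_pred_sub hk]

/-- For `lam ∈ (0,1)`, `t > 0` with `lam^t ≥ 1/2` and
`p = log (4 lam^t (1-lam)^t)`, there is a `(t,p)`-conformal Borel probability
measure on `(0,1]` with `m(W k) = ((k-1) + lam^(-t)(1-k/2)) * (1/2)^k` for `k ≥ 1`. -/
theorem stmt5 (lam t : ℝ) (h1 : 0 < lam) (h2 : lam < 1) (ht : 0 < t)
    (hlt : 1/2 ≤ lam ^ t) :
    ∃ m : Measure ℝ, IsProbabilityMeasure m ∧ m (Set.Ioc 0 1) = 1 ∧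
      IsConformal lam t (Real.log (4 * lam^t * (1-lam)^t)) m ∧
      ∀ k : ℕ, 1 ≤ k → m (Wint lam k) =
        ENNReal.ofReal (((k:ℝ) - 1 + lam ^ (-t) * (1 - (k:ℝ)/2)) * (1/2)^k) :=
  stmt5_general lam t h1 h2 hlt
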